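/- arXiv:2403.03275 — 2 statements merged into one kernel-verified Lean document; each statement's English description precedes it below -/
import Mathlib

section
/- Let α,β∈(0,1), set a=(1−α)/α and b=(1−β)/β, and let N≥1. Then the probability vector π(τ):=f_N(τ)/Σ_{τ'∈{0,1}^N} f_N(τ') is the stationary distribution of the open TASEP: Σ_{τ∈{0,1}^N} π(τ)·Q(τ,σ)=0 for every σ∈{0,1}^N. In other words, the stationary measure of the open TASEP with boundary rates α,β is the first-line marginal of the two-line ensemble, in which a pair of words (τ,ξ)∈{0,1}^N×{0,1}^N has probability proportional to b^(s^τ(N)−s^ξ(N))·(ab)^(−min_{0≤j≤N}(s^τ(j)−s^ξ(j))). -/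
/-!
The weights `f_N` satisfy the relations of the Derrida–Evans–Hakim–Pasquier matrix ansatz:
`α f(0u) = f(u)`, `β f(w1) = f(w)` (as `α (1 + a) = β (1 + b) = 1`), and `f(w) = f(w') + f(w'')`
when `w` has the pattern `10` at sites `i, i+1` and `w'`, `w''` are `w` with site `i+1`, resp. `i`,
removed. Each relation comes from splitting the sum over the second line `ξ` according to its
letter at the inserted site: inserting the same letter at the same place in both lines changes
neither `s^τ(N) - s^ξ(N)` nor the minimum of `s^τ - s^ξ`, and the other insertions only multiply
the weight by `a`, `b` or `1`.

Given the ansatz, the net flow into `σ` through the entry, through each bond and through the exit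
is a difference of the hat terms `±f(σ with one site removed)`, so the master equation telescopes.
-/

open Finset

/-- Partial sum `s^τ(k) = τ_1 + ⋯ + τ_k` of a word `τ ∈ {0,1}^N`. -/
def pSum {N : ℕ} (τ : Fin N → Fin 2) (k : ℕ) : ℤ :=
  ∑ i : Fin N, if (i : ℕ) < k then ((τ i : ℕ) : ℤ) else 0

/-- `min_{0 ≤ j ≤ N} (s^τ(j) − s^ξ(j))`. -/
def minDiff {N : ℕ} (τ ξ : Fin N → Fin 2) : ℤ :=
  (Finset.range (N + 1)).inf' (by simp) fun j => pSum τ j - pSum ξ j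

/-- `f_N(τ) = Σ_ξ b^(s^τ(N)−s^ξ(N)) (ab)^(−min_{0≤j≤N}(s^τ(j)−s^ξ(j)))`. -/
noncomputable def fTL (a b : ℝ) {N : ℕ} (τ : Fin N → Fin 2) : ℝ :=
  ∑ ξ : Fin N → Fin 2, b ^ (pSum τ N - pSum ξ N) * (a * b) ^ (-(minDiff τ ξ))

/-- Off-diagonal rates of the open TASEP generator on `N+1` sites:
rate `α` for entry at site `1`, rate `β` for exit at site `N+1`, rate `1` for each jump. -/
noncomputable def offQ (α β : ℝ) {N : ℕ} (τ τ' : Fin (N + 1) → Fin 2) : ℝ :=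
  (if τ 0 = 0 ∧ τ' = Function.update τ 0 1 then α else 0)
    + (if τ (Fin.last N) = 1 ∧ τ' = Function.update τ (Fin.last N) 0 then β else 0)
    + ∑ i : Fin N,
        if τ i.castSucc = 1 ∧ τ i.succ = 0 ∧
            τ' = Function.update (Function.update τ i.castSucc 0) i.succ 1 then (1 : ℝ) else 0

/-- The open TASEP generator `Q` on `{0,1}^{N+1}`. -/
noncomputable def Qgen (α β : ℝ) {N : ℕ} (τ τ' : Fin (N + 1) → Fin 2) : ℝ :=
  if τ' = τ then -∑ σ ∈ Finset.univ.erase τ, offQ α β τ σ else offQ α β τ τ'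

lemma inf'_range_eq_of_insert {α : Type*} [LinearOrder α] {M r : ℕ} (hr : r ≤ M + 1)
    (D D' : ℕ → α) (h_lt : ∀ j < r, D j = D' j)
    (h_gt : ∀ j, r < j → j ≤ M + 1 → D j = D' (j - 1)) (h_at : ∃ j ≤ M, D' j ≤ D r) :
    (range (M + 2)).inf' (by simp) D = (range (M + 1)).inf' (by simp) D' := by
  apply le_antisymm
  · refine le_inf' _ _ fun j hj => ?_
    rw [mem_range] at hj
    rcases lt_or_ge j r with h | h
    · rw [← h_lt j h]
      exact inf'_le _ (by simp; omega)
    · rw [show D' j = D (j + 1) by simp [h_gt (j + 1) (by omega) (by omega)]]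
      exact inf'_le _ (by simp; omega)
  · refine le_inf' _ _ fun j hj => ?_
    rw [mem_range] at hj
    rcases lt_trichotomy j r with h | rfl | h
    · rw [h_lt j h]
      exact inf'_le _ (by simp; omega)
    · obtain ⟨j₀, hj₀, hle⟩ := h_at
      exact (inf'_le _ (by simp; omega)).trans hle
    · rw [h_gt j h (by omega)]
      exact inf'_le _ (by simp; omega)

lemma pSum_zero {N : ℕ} (τ : Fin N → Fin 2) : pSum τ 0 = 0 := by
  simp [pSum]

lemma pSum_succ_le {N : ℕ} (τ : Fin N → Fin 2) (k : ℕ) : pSum τ (k + 1) ≤ pSum τ k + 1 := by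
  have h_split : pSum τ (k + 1) =
      pSum τ k + ∑ i : Fin N, if (i : ℕ) = k then ((τ i : ℕ) : ℤ) else 0 := by
    simp only [pSum, ← sum_add_distrib]
    refine sum_congr rfl fun i _ => ?_
    split_ifs <;> omega
  have h_single : (∑ i : Fin N, if (i : ℕ) = k then ((τ i : ℕ) : ℤ) else 0) ≤ 1 := by
    by_cases hk : k < N
    · rw [Fintype.sum_eq_single ⟨k, hk⟩ fun i hi => if_neg fun h => hi (Fin.ext h), if_pos rfl]
      exact_mod_cast Nat.le_of_lt_succ (τ _).isLt
    · rw [sum_eq_zero fun i _ => if_neg (by omega)]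
      norm_num
  omega

lemma pSum_insertNth {N : ℕ} (p : Fin (N + 1)) (x : Fin 2) (u : Fin N → Fin 2) (j : ℕ) :
    pSum (Fin.insertNth p x u) j =
      if j ≤ p then pSum u j else pSum u (j - 1) + ((x : ℕ) : ℤ) := by
  have h_val : ∀ k : Fin N, (p.succAbove k : ℕ) = if (k : ℕ) < p then (k : ℕ) else k + 1 := by
    intro k
    simp only [Fin.succAbove, Fin.lt_def, Fin.val_castSucc]
    split_ifs <;> simp
  unfold pSum
  rw [Fin.sum_univ_succAbove _ p]
  simp only [Fin.insertNth_apply_same, Fin.insertNth_apply_succAbove, h_val]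
  by_cases h : j ≤ p
  · rw [if_pos h, if_neg (show ¬(p : ℕ) < j by omega), zero_add]
    refine sum_congr rfl fun k _ => ?_
    split_ifs <;> first | rfl | omega
  · rw [if_neg h, if_pos (show (p : ℕ) < j by omega), add_comm]
    refine congrArg (· + _) (sum_congr rfl fun k _ => ?_)
    split_ifs <;> first | rfl | omega

lemma pSum_insertNth_length {N : ℕ} (p : Fin (N + 1)) (x : Fin 2) (u : Fin N → Fin 2) :
    pSum (Fin.insertNth p x u) (N + 1) = pSum u N + ((x : ℕ) : ℤ) := by
  rw [pSum_insertNth, if_neg (by omega), Nat.add_sub_cancel]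

lemma minDiff_insertNth_insertNth {N : ℕ} (p : Fin (N + 1)) (x : Fin 2) (u η : Fin N → Fin 2) :
    minDiff (Fin.insertNth p x u) (Fin.insertNth p x η) = minDiff u η := by
  refine inf'_range_eq_of_insert (r := p) (by omega) _ _ (fun j hj => ?_) (fun j hj _ => ?_)
    ⟨p, by omega, ?_⟩ <;> simp only [pSum_insertNth] <;> split_ifs <;> omega

lemma minDiff_insertNth_zero_zero_one {N : ℕ} (u η : Fin N → Fin 2) :
    minDiff (Fin.insertNth 0 0 u) (Fin.insertNth 0 1 η) = minDiff u η - 1 := by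
  have h_shift : minDiff u η - 1 =
      (range (N + 1)).inf' (by simp) fun j => pSum u j - pSum η j - 1 :=
    apply_inf'_eq_inf'_comp _ (· - 1) fun x y => (min_sub_sub_right x y 1).symm
  rw [h_shift]
  refine inf'_range_eq_of_insert (r := 0) (by omega) _ _ (fun j hj => by omega)
    (fun j hj _ => ?_) ⟨0, by omega, ?_⟩ <;>
    simp only [pSum_insertNth, pSum_zero, Fin.val_zero, Fin.val_one] <;> (try split_ifs) <;> omega

lemma minDiff_insertNth_last_one_zero {N : ℕ} (u η : Fin N → Fin 2) :
    minDiff (Fin.insertNth (Fin.last N) 1 u) (Fin.insertNth (Fin.last N) 0 η) = minDiff u η := by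
  refine inf'_range_eq_of_insert (r := N + 1) le_rfl _ _ (fun j hj => ?_) (fun j hj _ => by omega)
    ⟨N, le_rfl, ?_⟩ <;>
    simp only [pSum_insertNth, Nat.add_sub_cancel, Fin.val_last, Fin.val_zero, Fin.val_one] <;>
    (try split_ifs) <;> omega

lemma minDiff_insertNth_castSucc_succ {N : ℕ} (i : Fin N) (u η : Fin N → Fin 2) :
    minDiff (Fin.insertNth i.castSucc 1 u) (Fin.insertNth i.succ 1 η) = minDiff u η := by
  have h_step := pSum_succ_le η i
  refine inf'_range_eq_of_insert (r := i + 1) (by omega) _ _ (fun j hj => ?_) (fun j hj _ => ?_)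
    ⟨i, by omega, ?_⟩ <;>
    simp only [pSum_insertNth, Nat.add_sub_cancel, Fin.val_castSucc, Fin.val_succ, Fin.val_one] <;>
    (try split_ifs) <;> omega

noncomputable def twoLineWeight (a b : ℝ) {N : ℕ} (τ ξ : Fin N → Fin 2) : ℝ :=
  b ^ (pSum τ N - pSum ξ N) * (a * b) ^ (-minDiff τ ξ)

lemma fTL_eq_sum_twoLineWeight (a b : ℝ) {N : ℕ} (τ : Fin N → Fin 2) :
    fTL a b τ = ∑ ξ, twoLineWeight a b τ ξ :=
  rfl

lemma fTL_eq_sum_insertNth (a b : ℝ) {N : ℕ} (p : Fin (N + 1)) (τ : Fin (N + 1) → Fin 2) :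
    fTL a b τ = ∑ y : Fin 2, ∑ η : Fin N → Fin 2, twoLineWeight a b τ (Fin.insertNth p y η) := by
  rw [fTL_eq_sum_twoLineWeight, ← (Fin.insertNthEquiv (fun _ => Fin 2) p).sum_comp,
    Fintype.sum_prod_type]
  rfl

lemma twoLineWeight_insertNth_insertNth (a b : ℝ) {N : ℕ} (p : Fin (N + 1)) (x : Fin 2)
    (u η : Fin N → Fin 2) :
    twoLineWeight a b (Fin.insertNth p x u) (Fin.insertNth p x η) = twoLineWeight a b u η := by
  simp only [twoLineWeight, pSum_insertNth_length, minDiff_insertNth_insertNth,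
    add_sub_add_right_eq_sub]

lemma twoLineWeight_insertNth_zero_zero_one {a b : ℝ} (ha : a ≠ 0) (hb : b ≠ 0) {N : ℕ}
    (u η : Fin N → Fin 2) :
    twoLineWeight a b (Fin.insertNth 0 0 u) (Fin.insertNth 0 1 η) = a * twoLineWeight a b u η := by
  simp only [twoLineWeight, pSum_insertNth_length, minDiff_insertNth_zero_zero_one, Fin.val_zero,
    Fin.val_one, Nat.cast_zero, Nat.cast_one, add_zero, sub_add_eq_sub_sub, neg_sub',
    sub_neg_eq_add, zpow_sub_one₀ hb, zpow_add_one₀ (mul_ne_zero ha hb)]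
  field_simp

lemma twoLineWeight_insertNth_last_one_zero {a b : ℝ} (hb : b ≠ 0) {N : ℕ} (u η : Fin N → Fin 2) :
    twoLineWeight a b (Fin.insertNth (Fin.last N) 1 u) (Fin.insertNth (Fin.last N) 0 η) =
      b * twoLineWeight a b u η := by
  simp only [twoLineWeight, pSum_insertNth_length, minDiff_insertNth_last_one_zero, Fin.val_zero,
    Fin.val_one, Nat.cast_zero, Nat.cast_one, add_zero, add_sub_right_comm, zpow_add_one₀ hb]
  ring

lemma twoLineWeight_insertNth_castSucc_succ (a b : ℝ) {N : ℕ} (i : Fin N) (u η : Fin N → Fin 2) :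
    twoLineWeight a b (Fin.insertNth i.castSucc 1 u) (Fin.insertNth i.succ 1 η) =
      twoLineWeight a b u η := by
  simp only [twoLineWeight, pSum_insertNth_length, minDiff_insertNth_castSucc_succ,
    add_sub_add_right_eq_sub]

lemma fTL_insertNth_zero_zero {a b : ℝ} (ha : a ≠ 0) (hb : b ≠ 0) {N : ℕ} (u : Fin N → Fin 2) :
    fTL a b (Fin.insertNth 0 0 u) = (1 + a) * fTL a b u := by
  rw [fTL_eq_sum_insertNth a b 0, Fin.sum_univ_two]
  simp only [twoLineWeight_insertNth_insertNth, twoLineWeight_insertNth_zero_zero_one ha hb,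
    ← mul_sum, ← fTL_eq_sum_twoLineWeight]
  ring

lemma fTL_insertNth_last_one {a b : ℝ} (hb : b ≠ 0) {N : ℕ} (u : Fin N → Fin 2) :
    fTL a b (Fin.insertNth (Fin.last N) 1 u) = (1 + b) * fTL a b u := by
  rw [fTL_eq_sum_insertNth a b (Fin.last N), Fin.sum_univ_two]
  simp only [twoLineWeight_insertNth_insertNth, twoLineWeight_insertNth_last_one_zero hb,
    ← mul_sum, ← fTL_eq_sum_twoLineWeight]
  ring

lemma fTL_eq_add_of_one_zero (a b : ℝ) {N : ℕ} (w : Fin (N + 1) → Fin 2) (i : Fin N)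
    (h_one : w i.castSucc = 1) (h_zero : w i.succ = 0) :
    fTL a b w = fTL a b (Fin.removeNth i.succ w) + fTL a b (Fin.removeNth i.castSucc w) := by
  rw [fTL_eq_sum_insertNth a b i.succ, Fin.sum_univ_two]
  congr 1
  · obtain ⟨u, rfl⟩ : ∃ u, w = Fin.insertNth i.succ 0 u :=
      ⟨_, by rw [← h_zero, Fin.insertNth_self_removeNth]⟩
    simp only [twoLineWeight_insertNth_insertNth, Fin.removeNth_insertNth,
      ← fTL_eq_sum_twoLineWeight]
  · obtain ⟨u, rfl⟩ : ∃ u, w = Fin.insertNth i.castSucc 1 u :=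
      ⟨_, by rw [← h_one, Fin.insertNth_self_removeNth]⟩
    simp only [twoLineWeight_insertNth_castSucc_succ, Fin.removeNth_insertNth,
      ← fTL_eq_sum_twoLineWeight]

lemma Fin.sum_succ_sub_castSucc {M : Type*} [AddCommGroup M] {n : ℕ} (f : Fin (n + 1) → M) :
    ∑ i : Fin n, (f i.succ - f i.castSucc) = f (Fin.last n) - f 0 := by
  rw [sum_sub_distrib, sub_eq_sub_iff_add_eq_add, add_comm, ← Fin.sum_univ_succ,
    Fin.sum_univ_castSucc, add_comm]

lemma Fin.removeNth_succ_comp_swap {β : Type*} {N : ℕ} (σ : Fin (N + 1) → β) (i : Fin N) :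
    Fin.removeNth i.succ (σ ∘ Equiv.swap i.castSucc i.succ) = Fin.removeNth i.castSucc σ := by
  ext k
  simp only [Fin.removeNth, Function.comp_apply]
  congr 1
  simp only [Fin.succAbove, Equiv.swap_apply_def]
  grind

section

variable {ι β M : Type*} [Fintype ι] [DecidableEq ι] [Fintype β] [DecidableEq β]
  [AddCommMonoid M]

lemma sum_ite_apply_eq_and_eq_update (g : (ι → β) → M) (σ : ι → β) (p : ι) (v w : β) :
    ∑ τ, (if τ p = v ∧ σ = Function.update τ p w then g τ else 0) =
      if σ p = w then g (Function.update σ p v) else 0 := by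
  have h_rev : ∀ τ : ι → β,
      (τ p = v ∧ σ = Function.update τ p w) ↔ (σ p = w ∧ τ = Function.update σ p v) := by
    refine fun τ => ⟨?_, ?_⟩ <;> rintro ⟨rfl, rfl⟩ <;> simp
  simp only [h_rev, ite_and]
  simp

lemma sum_ite_apply_eq_and_eq_update_update (g : (ι → β) → M) (σ : ι → β) {c s : ι}
    (hcs : c ≠ s) (v w : β) :
    ∑ τ, (if τ c = v ∧ τ s = w ∧ σ = Function.update (Function.update τ c w) s v then g τ else 0) =
      if σ c = w ∧ σ s = v then g (σ ∘ Equiv.swap c s) else 0 := by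
  have h_rev : ∀ τ : ι → β,
      (τ c = v ∧ τ s = w ∧ σ = Function.update (Function.update τ c w) s v) ↔
        (σ c = w ∧ σ s = v ∧ τ = σ ∘ Equiv.swap c s) := by
    refine fun τ => ⟨?_, ?_⟩ <;> rintro ⟨rfl, rfl, rfl⟩ <;> refine ⟨by simp [hcs], by simp, ?_⟩ <;>
      ext x <;> simp only [Function.comp_apply, Equiv.swap_apply_def, Function.update_apply] <;>
      split_ifs <;> simp_all
  simp only [h_rev, ite_and, ← and_assoc]
  simp

end

lemma offQ_self (α β : ℝ) {N : ℕ} (σ : Fin (N + 1) → Fin 2) : offQ α β σ σ = 0 := by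
  have h_fix : ∀ (f : Fin (N + 1) → Fin 2) (p : Fin (N + 1)) (v : Fin 2),
      σ p ≠ v → σ ≠ Function.update f p v :=
    fun f p v hv he => hv (by rw [he, Function.update_self])
  simp only [offQ]
  rw [if_neg fun h => h_fix σ 0 1 (by simp [h.1]) h.2,
    if_neg fun h => h_fix σ _ 0 (by simp [h.1]) h.2,
    sum_eq_zero fun i _ => if_neg fun h => h_fix _ i.succ 1 (by simp [h.2.1]) h.2.2]
  simp

lemma sum_offQ (α β : ℝ) {N : ℕ} (σ : Fin (N + 1) → Fin 2) :
    ∑ τ, offQ α β σ τ =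
      (if σ 0 = 0 then α else 0) + (if σ (Fin.last N) = 1 then β else 0) +
        ∑ i : Fin N, if σ i.castSucc = 1 ∧ σ i.succ = 0 then 1 else 0 := by
  simp only [offQ, sum_add_distrib]
  rw [sum_comm]
  simp [ite_and]

lemma sum_mul_offQ (α β : ℝ) {N : ℕ} (g : (Fin (N + 1) → Fin 2) → ℝ) (σ : Fin (N + 1) → Fin 2) :
    ∑ τ, g τ * offQ α β τ σ =
      (if σ 0 = 1 then α * g (Function.update σ 0 0) else 0) +
        (if σ (Fin.last N) = 0 then β * g (Function.update σ (Fin.last N) 1) else 0) +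
        ∑ i : Fin N,
          if σ i.castSucc = 0 ∧ σ i.succ = 1 then g (σ ∘ Equiv.swap i.castSucc i.succ) else 0 := by
  simp only [offQ, mul_add, mul_sum, mul_ite, mul_zero, sum_add_distrib]
  rw [sum_comm]
  simp only [sum_ite_apply_eq_and_eq_update,
    sum_ite_apply_eq_and_eq_update_update _ _ Fin.castSucc_lt_succ.ne, mul_comm, mul_one]

lemma sum_mul_Qgen (α β : ℝ) {N : ℕ} (g : (Fin (N + 1) → Fin 2) → ℝ) (σ : Fin (N + 1) → Fin 2) :
    ∑ τ, g τ * Qgen α β τ σ = ∑ τ, g τ * offQ α β τ σ - g σ * ∑ τ, offQ α β σ τ := by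
  have h_diag : Qgen α β σ σ = -∑ τ ∈ univ.erase σ, offQ α β σ τ := if_pos rfl
  have h_off : ∀ τ ∈ univ.erase σ, g τ * Qgen α β τ σ = g τ * offQ α β τ σ := fun τ hτ => by
    rw [Qgen, if_neg (ne_of_mem_erase hτ).symm]
  rw [← add_sum_erase _ _ (mem_univ σ), h_diag, sum_congr rfl h_off, sum_erase_eq_sub (mem_univ σ),
    sum_erase_eq_sub (mem_univ σ), offQ_self]
  ring

section MatrixAnsatz

variable {α β : ℝ} {N : ℕ} {g : (Fin (N + 1) → Fin 2) → ℝ} {h : (Fin N → Fin 2) → ℝ}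

/-- The hat term of Derrida–Evans–Hakim–Pasquier: the weight of `σ` with the letter at site `k`
replaced by `D̂ = 1` (a particle) or `Ê = -1` (a hole). -/
noncomputable def hatTerm (h : (Fin N → Fin 2) → ℝ) (σ : Fin (N + 1) → Fin 2) (k : Fin (N + 1)) :
    ℝ :=
  (if σ k = 1 then 1 else -1) * h (Fin.removeNth k σ)

lemma entry_balance (h_entry : ∀ u, α * g (Fin.insertNth 0 0 u) = h u) (σ : Fin (N + 1) → Fin 2) :
    (if σ 0 = 1 then α * g (Function.update σ 0 0) else 0) - g σ * (if σ 0 = 0 then α else 0) =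
      hatTerm h σ 0 := by
  have h_upd : α * g (Function.update σ 0 0) = h (Fin.removeNth 0 σ) := by
    rw [← Fin.insertNth_removeNth, h_entry]
  obtain h0 | h0 : σ 0 = 0 ∨ σ 0 = 1 := by omega
  · rw [Function.update_eq_self_iff.mpr h0.symm] at h_upd
    simp [hatTerm, h0, h_upd, mul_comm]
  · simp [hatTerm, h0, h_upd]

lemma exit_balance (h_exit : ∀ u, β * g (Fin.insertNth (Fin.last N) 1 u) = h u)
    (σ : Fin (N + 1) → Fin 2) :
    (if σ (Fin.last N) = 0 then β * g (Function.update σ (Fin.last N) 1) else 0) -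
        g σ * (if σ (Fin.last N) = 1 then β else 0) =
      -hatTerm h σ (Fin.last N) := by
  have h_upd : β * g (Function.update σ (Fin.last N) 1) = h (Fin.removeNth (Fin.last N) σ) := by
    rw [← Fin.insertNth_removeNth, h_exit]
  obtain h0 | h0 : σ (Fin.last N) = 0 ∨ σ (Fin.last N) = 1 := by omega
  · simp [hatTerm, h0, h_upd]
  · rw [Function.update_eq_self_iff.mpr h0.symm] at h_upd
    simp [hatTerm, h0, h_upd, mul_comm]

lemma bond_balance
    (h_bond : ∀ w (i : Fin N), w i.castSucc = 1 → w i.succ = 0 →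
      g w = h (Fin.removeNth i.succ w) + h (Fin.removeNth i.castSucc w))
    (σ : Fin (N + 1) → Fin 2) (i : Fin N) :
    (if σ i.castSucc = 0 ∧ σ i.succ = 1 then g (σ ∘ Equiv.swap i.castSucc i.succ) else 0) -
        g σ * (if σ i.castSucc = 1 ∧ σ i.succ = 0 then 1 else 0) =
      hatTerm h σ i.succ - hatTerm h σ i.castSucc := by
  set e := Equiv.swap i.castSucc i.succ
  have h_succ : Fin.removeNth i.succ (σ ∘ e) = Fin.removeNth i.castSucc σ :=
    Fin.removeNth_succ_comp_swap σ i
  have h_castSucc : Fin.removeNth i.castSucc (σ ∘ e) = Fin.removeNth i.succ σ := by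
    have h_inv : (σ ∘ e) ∘ e = σ := by ext; simp [e]
    rw [← Fin.removeNth_succ_comp_swap (σ ∘ e) i, h_inv]
  have h_fix : σ i.castSucc = σ i.succ → σ ∘ e = σ := fun h_eq => by
    rw [Equiv.comp_swap_eq_update, h_eq, Function.update_eq_self, ← h_eq, Function.update_eq_self]
  obtain h1 | h1 : σ i.castSucc = 0 ∨ σ i.castSucc = 1 := by omega
  all_goals obtain h2 | h2 : σ i.succ = 0 ∨ σ i.succ = 1 := by omega
  · rw [h_fix (h1.trans h2.symm)] at h_succ
    simp [hatTerm, h1, h2, h_succ]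
  · rw [h_bond _ i (by simp [e, h2]) (by simp [e, h1]), h_succ, h_castSucc]
    simp [hatTerm, h1, h2]
    ring
  · rw [h_bond σ i h1 h2]
    simp [hatTerm, h1, h2]
    ring
  · rw [h_fix (h1.trans h2.symm)] at h_succ
    simp [hatTerm, h1, h2, h_succ]

theorem sum_mul_Qgen_eq_zero_of_ansatz (h_entry : ∀ u, α * g (Fin.insertNth 0 0 u) = h u)
    (h_exit : ∀ u, β * g (Fin.insertNth (Fin.last N) 1 u) = h u)
    (h_bond : ∀ w (i : Fin N), w i.castSucc = 1 → w i.succ = 0 →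
      g w = h (Fin.removeNth i.succ w) + h (Fin.removeNth i.castSucc w))
    (σ : Fin (N + 1) → Fin 2) :
    ∑ τ, g τ * Qgen α β τ σ = 0 := by
  have h_bonds := sum_congr rfl fun i (_ : i ∈ univ) => bond_balance h_bond σ i
  rw [sum_sub_distrib, ← mul_sum, Fin.sum_succ_sub_castSucc] at h_bonds
  rw [sum_mul_Qgen, sum_mul_offQ, sum_offQ]
  linear_combination entry_balance h_entry σ + exit_balance h_exit σ + h_bonds

end MatrixAnsatz

/-- The normalized two-line marginal `π(τ) = f_N(τ)/Σ_{τ'} f_N(τ')`, with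
`a = (1−α)/α`, `b = (1−β)/β`, is stationary for the open TASEP. -/
theorem stmt4 (α β : ℝ) (hα : α ∈ Set.Ioo (0:ℝ) 1) (hβ : β ∈ Set.Ioo (0:ℝ) 1)
    (N : ℕ) (σ : Fin (N + 1) → Fin 2) :
    ∑ τ : Fin (N + 1) → Fin 2,
      (fTL ((1 - α) / α) ((1 - β) / β) τ /
          ∑ τ' : Fin (N + 1) → Fin 2, fTL ((1 - α) / α) ((1 - β) / β) τ')
        * Qgen α β τ σ = 0 := by
  obtain ⟨hα0, hα1⟩ := hα
  obtain ⟨hβ0, hβ1⟩ := hβ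
  set a := (1 - α) / α with ha_def
  set b := (1 - β) / β with hb_def
  have ha : a ≠ 0 := (div_pos (by linarith) hα0).ne'
  have hb : b ≠ 0 := (div_pos (by linarith) hβ0).ne'
  have hαa : α * (1 + a) = 1 := by rw [ha_def]; field_simp; ring
  have hβb : β * (1 + b) = 1 := by rw [hb_def]; field_simp; ring
  have h_entry : ∀ u : Fin N → Fin 2, α * fTL a b (Fin.insertNth 0 0 u) = fTL a b u := fun u => by
    rw [fTL_insertNth_zero_zero ha hb, ← mul_assoc, hαa, one_mul]
  have h_exit : ∀ u : Fin N → Fin 2, β * fTL a b (Fin.insertNth (Fin.last N) 1 u) = fTL a b u :=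
    fun u => by rw [fTL_insertNth_last_one hb, ← mul_assoc, hβb, one_mul]
  simp_rw [div_mul_eq_mul_div, ← sum_div]
  rw [sum_mul_Qgen_eq_zero_of_ansatz h_entry h_exit (fTL_eq_add_of_one_zero a b) σ, zero_div]
end

section
/- Let a,b>0 with ab≥1, let ρ:[0,1]→[0,1] be measurable and f(x)=∫_0^x ρ(t)dt. Then the infimum of J*(f,g) over all g(x)=∫_0^x σ(t)dt with σ:[0,1]→[0,1] measurable equals min_{y∈[0,1]} { f(y)·log a + y·log(1/(1+a)) + (1−y)·log(b/(1+b)) − (f(1)−f(y))·log b }. -/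
/-!
Fix a density `σ` with primitive `g` and let `y` minimise `f - g` on `[0,1]`. Splitting
`∫₀¹ h(σ)` at `y` and bounding `h(s)` from below by the affine minorants
`s log a - log (1 + a)` on `[0, y]` and `(1 - s) log b - log (1 + b)` on `[y, 1]` bounds
`J*(f, g)` from below by the right-hand side at `y`. Conversely, the step density equal to
`a / (1 + a)` on `[0, y]` and `1 / (1 + b)` on `(y, 1]` makes both minorants exact, and since
`log (ab) ≥ 0` the minimum in `J*` may only lower the value obtained at `y`.
-/

open Finset

/-- `h(x) = x log x + (1−x) log(1−x)` (with `0·log 0 = 0`, as `Real.log 0 = 0`). -/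
noncomputable def hEnt (x : ℝ) : ℝ := x * Real.log x + (1 - x) * Real.log (1 - x)

/-- `J*(f,g) = ∫₀¹ h(σ) + log(ab)·min_{[0,1]}(f−g) − log(b)·(f(1)−g(1))`, where
`g(x) = ∫₀ˣ σ(t) dt` is encoded by its density `σ`. -/
noncomputable def Jstar (a b : ℝ) (f σ : ℝ → ℝ) : ℝ :=
  (∫ x in (0:ℝ)..1, hEnt (σ x))
    + Real.log (a * b) * sInf ((fun x => f x - ∫ t in (0:ℝ)..x, σ t) '' Set.Icc 0 1)
    - Real.log b * (f 1 - ∫ t in (0:ℝ)..1, σ t)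

/-- `J_*(f,G) = ∫₀¹ [ρ log G + (1−ρ) log(1−G)]`, where `f(x) = ∫₀ˣ ρ(t) dt`. -/
noncomputable def Jlow (ρ G : ℝ → ℝ) : ℝ :=
  ∫ x in (0:ℝ)..1, (ρ x * Real.log (G x) + (1 - ρ x) * Real.log (1 - G x))

open Real MeasureTheory

lemma hEnt_one_sub (s : ℝ) : hEnt (1 - s) = hEnt s := by
  rw [hEnt, hEnt, sub_sub_cancel]
  ring

lemma continuous_hEnt : Continuous hEnt :=
  continuous_mul_log.add (continuous_mul_log.comp (continuous_const.sub continuous_id))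

lemma mul_log_le_mul_log_add_sub {s c : ℝ} (hs : 0 ≤ s) (hc : 0 < c) :
    s * log c ≤ s * log s + (c - s) := by
  rcases hs.eq_or_lt with rfl | hs
  · simpa using hc.le
  have h := mul_le_mul_of_nonneg_left (log_le_sub_one_of_pos (div_pos hc hs)) hs.le
  rw [log_div hc.ne' hs.ne', mul_sub, mul_sub, mul_div_cancel₀ _ hs.ne'] at h
  linarith

lemma mul_log_add_one_sub_mul_log_le_hEnt {s c : ℝ} (hs : s ∈ Set.Icc (0:ℝ) 1)
    (hc : c ∈ Set.Ioo (0:ℝ) 1) :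
    s * log c + (1 - s) * log (1 - c) ≤ hEnt s := by
  have h₁ := mul_log_le_mul_log_add_sub hs.1 hc.1
  have h₂ := mul_log_le_mul_log_add_sub (sub_nonneg.2 hs.2) (sub_pos.2 hc.2)
  unfold hEnt
  linarith

-- Fenchel–Young: `hEnt` is the Legendre transform of `t ↦ log (1 + exp t)`, taken at
-- `t = log a`; equality holds at `s = a / (1 + a)` (see `hEnt_div_one_add`).
lemma mul_log_sub_log_one_add_le_hEnt {a s : ℝ} (ha : 0 < a) (hs : s ∈ Set.Icc (0:ℝ) 1) :
    s * log a - log (1 + a) ≤ hEnt s := by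
  have ha' : 0 < 1 + a := by linarith
  have hc : a / (1 + a) ∈ Set.Ioo (0:ℝ) 1 :=
    ⟨by positivity, (div_lt_one ha').2 (by linarith)⟩
  have h := mul_log_add_one_sub_mul_log_le_hEnt hs hc
  rw [one_sub_div ha'.ne', add_sub_cancel_right, log_div ha.ne' ha'.ne',
    log_div one_ne_zero ha'.ne', log_one] at h
  linear_combination h

lemma hEnt_div_one_add {a : ℝ} (ha : 0 < a) :
    hEnt (a / (1 + a)) = a / (1 + a) * log a - log (1 + a) := by
  have ha' : 0 < 1 + a := by linarith
  rw [hEnt, one_sub_div ha'.ne', add_sub_cancel_right, log_div ha.ne' ha'.ne',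
    log_div one_ne_zero ha'.ne', log_one]
  field_simp
  ring

lemma one_sub_mul_log_sub_log_one_add_le_hEnt {b s : ℝ} (hb : 0 < b)
    (hs : s ∈ Set.Icc (0:ℝ) 1) :
    (1 - s) * log b - log (1 + b) ≤ hEnt s :=
  hEnt_one_sub s ▸ mul_log_sub_log_one_add_le_hEnt hb (Set.sub_mem_Icc_zero_iff_right.2 hs)

lemma integrableOn_comp_of_mapsTo {α : Type*} [MeasurableSpace α] {μ : Measure α}
    {φ : α → ℝ} {s : Set α} {K : Set ℝ} (hK : IsCompact K) {g : ℝ → ℝ}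
    (hg : Continuous g) (hφ : Measurable φ) (hs : MeasurableSet s) (hμs : μ s ≠ ⊤)
    (hφK : Set.MapsTo φ s K) :
    IntegrableOn (g ∘ φ) s μ := by
  obtain ⟨C, hC⟩ := hK.exists_bound_of_continuousOn hg.continuousOn
  exact Measure.integrableOn_of_bounded hμs (hg.measurable.comp hφ).aestronglyMeasurable
    (ae_restrict_of_forall_mem hs fun x hx => hC _ (hφK hx))

section UnitDensity

variable {σ : ℝ → ℝ}

lemma intervalIntegrable_comp_of_mapsTo {g : ℝ → ℝ} (hg : Continuous g) (hσ : Measurable σ)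
    (hσ01 : Set.MapsTo σ (Set.Icc 0 1) (Set.Icc 0 1)) {u v : ℝ} (hu : u ∈ Set.Icc (0:ℝ) 1)
    (hv : v ∈ Set.Icc (0:ℝ) 1) :
    IntervalIntegrable (fun x => g (σ x)) volume u v :=
  ((integrableOn_comp_of_mapsTo isCompact_Icc hg hσ measurableSet_Icc
    (by simp) hσ01).mono_set (Set.uIcc_subset_Icc hu hv)).intervalIntegrable

lemma intervalIntegrable_of_mapsTo (hσ : Measurable σ)
    (hσ01 : Set.MapsTo σ (Set.Icc 0 1) (Set.Icc 0 1)) {u v : ℝ} (hu : u ∈ Set.Icc (0:ℝ) 1)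
    (hv : v ∈ Set.Icc (0:ℝ) 1) :
    IntervalIntegrable σ volume u v :=
  intervalIntegrable_comp_of_mapsTo continuous_id hσ hσ01 hu hv

lemma continuousOn_primitive_of_mapsTo (hσ : Measurable σ)
    (hσ01 : Set.MapsTo σ (Set.Icc 0 1) (Set.Icc 0 1)) :
    ContinuousOn (fun x => ∫ t in (0:ℝ)..x, σ t) (Set.Icc 0 1) := by
  simpa [Set.uIcc_of_le zero_le_one] using intervalIntegral.continuousOn_primitive_interval'
    (intervalIntegrable_of_mapsTo hσ hσ01 (u := 0) (v := 1) (by simp) (by simp)) (by simp)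

lemma le_integral_hEnt_comp {a b y : ℝ} (ha : 0 < a) (hb : 0 < b) (hσ : Measurable σ)
    (hσ01 : Set.MapsTo σ (Set.Icc 0 1) (Set.Icc 0 1)) (hy : y ∈ Set.Icc (0:ℝ) 1) :
    (∫ t in (0:ℝ)..y, σ t) * log a - y * log (1 + a)
        + ((1 - y) - ∫ t in y..1, σ t) * log b - (1 - y) * log (1 + b)
      ≤ ∫ x in (0:ℝ)..1, hEnt (σ x) := by
  have h0 : (0:ℝ) ∈ Set.Icc (0:ℝ) 1 := Set.left_mem_Icc.2 zero_le_one
  have h1 : (1:ℝ) ∈ Set.Icc (0:ℝ) 1 := Set.right_mem_Icc.2 zero_le_one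
  have hent₀ := intervalIntegrable_comp_of_mapsTo continuous_hEnt hσ hσ01 h0 hy
  have hent₁ := intervalIntegrable_comp_of_mapsTo continuous_hEnt hσ hσ01 hy h1
  have left : (∫ t in (0:ℝ)..y, σ t) * log a - y * log (1 + a)
      ≤ ∫ x in (0:ℝ)..y, hEnt (σ x) := by
    have hI := intervalIntegrable_of_mapsTo hσ hσ01 h0 hy
    have := intervalIntegral.integral_mono_on hy.1
      ((hI.mul_const (log a)).sub intervalIntegrable_const) hent₀
      fun x hx => mul_log_sub_log_one_add_le_hEnt ha (hσ01 (Set.Icc_subset_Icc_right hy.2 hx))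
    rwa [intervalIntegral.integral_sub (hI.mul_const _) intervalIntegrable_const,
      intervalIntegral.integral_mul_const, intervalIntegral.integral_const, smul_eq_mul,
      sub_zero] at this
  have right : ((1 - y) - ∫ t in y..1, σ t) * log b - (1 - y) * log (1 + b)
      ≤ ∫ x in y..1, hEnt (σ x) := by
    have hσI := intervalIntegrable_of_mapsTo hσ hσ01 hy h1
    have hI : IntervalIntegrable (fun x => 1 - σ x) volume y 1 := intervalIntegrable_const.sub hσI
    have := intervalIntegral.integral_mono_on hy.2
      ((hI.mul_const (log b)).sub intervalIntegrable_const) hent₁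
      fun x hx => one_sub_mul_log_sub_log_one_add_le_hEnt hb
        (hσ01 (Set.Icc_subset_Icc_left hy.1 hx))
    rwa [intervalIntegral.integral_sub (hI.mul_const _) intervalIntegrable_const,
      intervalIntegral.integral_mul_const, intervalIntegral.integral_sub intervalIntegrable_const
      hσI, intervalIntegral.integral_const, intervalIntegral.integral_const, smul_eq_mul,
      smul_eq_mul, mul_one] at this
  rw [← intervalIntegral.integral_add_adjacent_intervals hent₀ hent₁]
  linarith

end UnitDensity

noncomputable def JstarAt (a b : ℝ) (f σ : ℝ → ℝ) (y : ℝ) : ℝ :=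
  (∫ x in (0:ℝ)..1, hEnt (σ x))
    + log (a * b) * (f y - ∫ t in (0:ℝ)..y, σ t)
    - log b * (f 1 - ∫ t in (0:ℝ)..1, σ t)

noncomputable def splitCost (a b : ℝ) (f : ℝ → ℝ) (y : ℝ) : ℝ :=
  f y * log a + y * log (1 / (1 + a)) + (1 - y) * log (b / (1 + b)) - (f 1 - f y) * log b

noncomputable def stepDensity (a b y x : ℝ) : ℝ :=
  if x ≤ y then a / (1 + a) else 1 - b / (1 + b)

section Bounds

variable {a b y : ℝ} {f σ : ℝ → ℝ}

lemma Jstar_eq_JstarAt_of_isMinOn (hy : y ∈ Set.Icc (0:ℝ) 1)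
    (hmin : IsMinOn (fun x => f x - ∫ t in (0:ℝ)..x, σ t) (Set.Icc 0 1) y) :
    Jstar a b f σ = JstarAt a b f σ y := by
  rw [Jstar, JstarAt, IsLeast.csInf_eq ⟨Set.mem_image_of_mem _ hy, ?_⟩]
  rintro _ ⟨x, hx, rfl⟩
  exact hmin hx

lemma Jstar_le_JstarAt (hab : 1 ≤ a * b)
    (hbdd : BddBelow ((fun x => f x - ∫ t in (0:ℝ)..x, σ t) '' Set.Icc 0 1))
    (hy : y ∈ Set.Icc (0:ℝ) 1) :
    Jstar a b f σ ≤ JstarAt a b f σ y := by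
  rw [Jstar, JstarAt]
  gcongr
  · exact log_nonneg hab
  · exact csInf_le hbdd (Set.mem_image_of_mem _ hy)

lemma splitCost_le_JstarAt (ha : 0 < a) (hb : 0 < b) (hσ : Measurable σ)
    (hσ01 : Set.MapsTo σ (Set.Icc 0 1) (Set.Icc 0 1)) (hy : y ∈ Set.Icc (0:ℝ) 1) :
    splitCost a b f y ≤ JstarAt a b f σ y := by
  have hent := le_integral_hEnt_comp ha hb hσ hσ01 hy
  have hsplit := intervalIntegral.integral_add_adjacent_intervals
    (intervalIntegrable_of_mapsTo hσ hσ01 (Set.left_mem_Icc.2 zero_le_one) hy)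
    (intervalIntegrable_of_mapsTo hσ hσ01 hy (Set.right_mem_Icc.2 zero_le_one))
  rw [splitCost, JstarAt, ← hsplit, log_mul ha.ne' hb.ne', log_div one_ne_zero (by positivity),
    log_one, log_div hb.ne' (by positivity)]
  linear_combination hent

lemma exists_splitCost_le_Jstar (ha : 0 < a) (hb : 0 < b) (hf : ContinuousOn f (Set.Icc 0 1))
    (hσ : Measurable σ) (hσ01 : Set.MapsTo σ (Set.Icc 0 1) (Set.Icc 0 1)) :
    ∃ y ∈ Set.Icc (0:ℝ) 1, splitCost a b f y ≤ Jstar a b f σ := by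
  obtain ⟨y, hy, hmin⟩ := isCompact_Icc.exists_isMinOn (Set.nonempty_Icc.2 zero_le_one)
    (hf.sub (continuousOn_primitive_of_mapsTo hσ hσ01))
  exact ⟨y, hy, Jstar_eq_JstarAt_of_isMinOn hy hmin ▸ splitCost_le_JstarAt ha hb hσ hσ01 hy⟩

end Bounds

section StepDensity

variable {a b y : ℝ}

lemma measurable_stepDensity : Measurable (stepDensity a b y) :=
  Measurable.ite measurableSet_Iic measurable_const measurable_const

lemma mapsTo_stepDensity (ha : 0 < a) (hb : 0 < b) :
    Set.MapsTo (stepDensity a b y) (Set.Icc 0 1) (Set.Icc 0 1) := by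
  have hmem : ∀ {c : ℝ}, 0 < c → c / (1 + c) ∈ Set.Icc (0:ℝ) 1 := fun hc =>
    ⟨by positivity, (div_le_one (by positivity)).2 (by linarith)⟩
  intro x _
  unfold stepDensity
  split_ifs
  · exact hmem ha
  · exact Set.sub_mem_Icc_zero_iff_right.2 (hmem hb)

lemma integral_comp_stepDensity_left (g : ℝ → ℝ) (hy₀ : 0 ≤ y) :
    ∫ x in (0:ℝ)..y, g (stepDensity a b y x) = y * g (a / (1 + a)) := by
  rw [intervalIntegral.integral_congr (g := fun _ => g (a / (1 + a))),
    intervalIntegral.integral_const, smul_eq_mul, sub_zero]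
  intro x hx
  rw [Set.uIcc_of_le hy₀] at hx
  simp only [stepDensity, if_pos hx.2]

lemma integral_comp_stepDensity_right (g : ℝ → ℝ) (hy₁ : y ≤ 1) :
    ∫ x in y..1, g (stepDensity a b y x) = (1 - y) * g (1 - b / (1 + b)) := by
  rw [intervalIntegral.integral_congr_ae (g := fun _ => g (1 - b / (1 + b))),
    intervalIntegral.integral_const, smul_eq_mul]
  refine Filter.Eventually.of_forall fun x hx => ?_
  rw [Set.uIoc_of_le hy₁] at hx
  simp only [stepDensity, if_neg (not_le.2 hx.1)]

lemma integral_comp_stepDensity {g : ℝ → ℝ} (hg : Continuous g) (ha : 0 < a) (hb : 0 < b)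
    (hy : y ∈ Set.Icc (0:ℝ) 1) :
    ∫ x in (0:ℝ)..1, g (stepDensity a b y x)
      = y * g (a / (1 + a)) + (1 - y) * g (1 - b / (1 + b)) := by
  rw [← intervalIntegral.integral_add_adjacent_intervals
    (intervalIntegrable_comp_of_mapsTo hg measurable_stepDensity (mapsTo_stepDensity ha hb)
      (Set.left_mem_Icc.2 zero_le_one) hy)
    (intervalIntegrable_comp_of_mapsTo hg measurable_stepDensity (mapsTo_stepDensity ha hb)
      hy (Set.right_mem_Icc.2 zero_le_one)),
    integral_comp_stepDensity_left g hy.1, integral_comp_stepDensity_right g hy.2]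

lemma JstarAt_stepDensity (f : ℝ → ℝ) (ha : 0 < a) (hb : 0 < b)
    (hy : y ∈ Set.Icc (0:ℝ) 1) :
    JstarAt a b f (stepDensity a b y) y = splitCost a b f y := by
  have hσ := integral_comp_stepDensity continuous_id ha hb hy
  have hσ_left := integral_comp_stepDensity_left (a := a) (b := b) id hy.1
  simp only [id] at hσ hσ_left
  rw [JstarAt, splitCost, integral_comp_stepDensity continuous_hEnt ha hb hy, hσ, hσ_left,
    hEnt_one_sub, hEnt_div_one_add ha, hEnt_div_one_add hb, log_mul ha.ne' hb.ne',
    log_div one_ne_zero (by positivity), log_one, log_div hb.ne' (by positivity)]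
  ring

lemma Jstar_stepDensity_le_splitCost {f : ℝ → ℝ} (ha : 0 < a) (hb : 0 < b) (hab : 1 ≤ a * b)
    (hf : ContinuousOn f (Set.Icc 0 1)) (hy : y ∈ Set.Icc (0:ℝ) 1) :
    Jstar a b f (stepDensity a b y) ≤ splitCost a b f y := by
  rw [← JstarAt_stepDensity f ha hb hy]
  refine Jstar_le_JstarAt hab (IsCompact.bddBelow_image isCompact_Icc ?_) hy
  exact hf.sub (continuousOn_primitive_of_mapsTo measurable_stepDensity (mapsTo_stepDensity ha hb))

end StepDensity

theorem stmt14 (a b : ℝ) (ha : 0 < a) (hb : 0 < b) (hab : 1 ≤ a * b)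
    (ρ : ℝ → ℝ) (hmeas : Measurable ρ)
    (hrange : ∀ x ∈ Set.Icc (0:ℝ) 1, ρ x ∈ Set.Icc (0:ℝ) 1) :
    sInf {v | ∃ σ : ℝ → ℝ, Measurable σ ∧ (∀ x ∈ Set.Icc (0:ℝ) 1, σ x ∈ Set.Icc (0:ℝ) 1) ∧
        v = Jstar a b (fun x => ∫ t in (0:ℝ)..x, ρ t) σ}
      = sInf {v | ∃ y ∈ Set.Icc (0:ℝ) 1,
        v = (∫ t in (0:ℝ)..y, ρ t) * Real.log a + y * Real.log (1 / (1 + a))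
            + (1 - y) * Real.log (b / (1 + b))
            - ((∫ t in (0:ℝ)..1, ρ t) - ∫ t in (0:ℝ)..y, ρ t) * Real.log b} := by
  have hf := continuousOn_primitive_of_mapsTo hmeas hrange
  apply csInf_eq_csInf_of_forall_exists_le
  · rintro _ ⟨σ, hσ, hσ01, rfl⟩
    obtain ⟨y, hy, hle⟩ := exists_splitCost_le_Jstar ha hb hf hσ hσ01
    exact ⟨_, ⟨y, hy, rfl⟩, hle⟩
  · rintro _ ⟨y, hy, rfl⟩
    exact ⟨_, ⟨stepDensity a b y, measurable_stepDensity, mapsTo_stepDensity ha hb, rfl⟩,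
      Jstar_stepDensity_le_splitCost ha hb hab hf hy⟩
end
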